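/- Let γ > 1, q > (γ−1)/γ and Q := γ(q−1)+1 > 0. Define for u ≥ 0 (and R, M > 0): f(u) = Q^{-1}((u+R)^Q − R^Q) for 0 ≤ u ≤ M and f(u) = Q^{-1}((M+R)^Q − R^Q) + (M+R)^{Q-1}(u−M) for u ≥ M. Then for all u ≥ 0: |f(u)|^γ / f'(u)^{γ-1} ≤ (1 + q/Q)^γ · (q^{-1}·F^q_{R,M}(u))^γ, where f'(u) = (min(u,M)+R)^{Q-1} and F^q_{R,M} is the truncated power function. -/

import Mathlib

/-- The truncated power function `F^q_{R,M}` from Section 3.1. -/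
noncomputable def Ftrunc (q R M z : ℝ) : ℝ :=
  if z ≤ M then (z + R) ^ q else (M + R) ^ q + q * (M + R) ^ (q - 1) * (z - M)

theorem stmt_19 (γ q R M : ℝ) (hγ : 1 < γ) (hq : (γ - 1) / γ < q)
    (hR : 0 < R) (hM : 0 < M)
    (Q : ℝ) (hQdef : Q = γ * (q - 1) + 1) (hQ : 0 < Q)
    (f : ℝ → ℝ)
    (hf : ∀ u : ℝ, 0 ≤ u → f u =
      if u ≤ M then Q⁻¹ * ((u + R) ^ Q - R ^ Q)
      else Q⁻¹ * ((M + R) ^ Q - R ^ Q) + (M + R) ^ (Q - 1) * (u - M))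
    (f' : ℝ → ℝ) (hf' : ∀ u : ℝ, 0 ≤ u → f' u = (min u M + R) ^ (Q - 1)) :
    ∀ u : ℝ, 0 ≤ u →
      |f u| ^ γ / f' u ^ (γ - 1) ≤ (1 + q / Q) ^ γ * (q⁻¹ * Ftrunc q R M u) ^ γ := by
  intro u hu
  have hγ0 : (0:ℝ) < γ := by linarith
  have hq0 : (0:ℝ) < q := lt_trans (div_pos (by linarith) hγ0) hq
  have hmin : (0:ℝ) ≤ min u M := le_min hu hM.le
  have ha0 : (0:ℝ) < min u M + R := by linarith
  have hc0 : (0:ℝ) < 1 + q / Q := by positivity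
  have e1 : q + (q - 1) * (γ - 1) = Q := by rw [hQdef]; ring
  have e2 : (q - 1) + (q - 1) * (γ - 1) = Q - 1 := by rw [hQdef]; ring
  have e3 : (q - 1) * (γ - 1) * γ = (Q - 1) * (γ - 1) := by rw [hQdef]; ring
  have hcq : (1 + q / Q) * q⁻¹ = q⁻¹ + Q⁻¹ := by field_simp
  -- nonnegativity of G := q⁻¹ * Ftrunc
  have hG0 : 0 ≤ q⁻¹ * Ftrunc q R M u := by
    rw [Ftrunc]
    by_cases hum : u ≤ M
    · rw [if_pos hum]
      have : (0:ℝ) ≤ (u + R) ^ q := Real.rpow_nonneg (by linarith) _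
      positivity
    · rw [if_neg hum]
      push_neg at hum
      have h1 : (0:ℝ) ≤ (M + R) ^ q := Real.rpow_nonneg (by linarith) _
      have h2 : (0:ℝ) ≤ (M + R) ^ (q - 1) := Real.rpow_nonneg (by linarith) _
      have h3 : (0:ℝ) ≤ u - M := by linarith
      positivity
  -- nonnegativity of f u
  have hf0 : 0 ≤ f u := by
    rw [hf u hu]
    by_cases hum : u ≤ M
    · rw [if_pos hum]
      have h1 : R ^ Q ≤ (u + R) ^ Q :=
        Real.rpow_le_rpow hR.le (by linarith) hQ.le
      have : (0:ℝ) ≤ (u + R) ^ Q - R ^ Q := by linarith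
      positivity
    · rw [if_neg hum]
      push_neg at hum
      have h1 : R ^ Q ≤ (M + R) ^ Q :=
        Real.rpow_le_rpow hR.le (by linarith) hQ.le
      have h2 : (0:ℝ) ≤ (M + R) ^ (Q - 1) := Real.rpow_nonneg (by linarith) _
      have h3 : (0:ℝ) ≤ u - M := by linarith
      nlinarith [mul_nonneg h2 h3, inv_pos.mpr hQ]
  -- the key pointwise inequality
  have hkey : f u ≤ (1 + q / Q) * (q⁻¹ * Ftrunc q R M u)
      * (min u M + R) ^ ((q - 1) * (γ - 1)) := by
    rw [hf u hu, Ftrunc]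
    by_cases hum : u ≤ M
    · rw [if_pos hum, if_pos hum, min_eq_left hum]
      have hx : (u + R) ^ q * (u + R) ^ ((q - 1) * (γ - 1)) = (u + R) ^ Q := by
        rw [← Real.rpow_add (by linarith), e1]
      have hrw : (1 + q / Q) * (q⁻¹ * (u + R) ^ q) * (u + R) ^ ((q - 1) * (γ - 1))
          = (q⁻¹ + Q⁻¹) * (u + R) ^ Q := by
        calc (1 + q / Q) * (q⁻¹ * (u + R) ^ q) * (u + R) ^ ((q - 1) * (γ - 1))
            = (1 + q / Q) * q⁻¹ * ((u + R) ^ q * (u + R) ^ ((q - 1) * (γ - 1))) := by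
              ring
          _ = (q⁻¹ + Q⁻¹) * (u + R) ^ Q := by rw [hx, hcq]
      rw [hrw]
      have hX : (0:ℝ) < (u + R) ^ Q := Real.rpow_pos_of_pos (by linarith) _
      have hRQ : (0:ℝ) < R ^ Q := Real.rpow_pos_of_pos hR _
      nlinarith [mul_pos (inv_pos.mpr hq0) hX, mul_pos (inv_pos.mpr hQ) hRQ]
    · push_neg at hum
      rw [if_neg (not_le.mpr hum), if_neg (not_le.mpr hum), min_eq_right hum.le]
      have hb0 : (0:ℝ) < M + R := by linarith
      have hb1 : (M + R) ^ q * (M + R) ^ ((q - 1) * (γ - 1)) = (M + R) ^ Q := by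
        rw [← Real.rpow_add hb0, e1]
      have hb2 : (M + R) ^ (q - 1) * (M + R) ^ ((q - 1) * (γ - 1))
          = (M + R) ^ (Q - 1) := by
        rw [← Real.rpow_add hb0, e2]
      have hrw : (1 + q / Q) * (q⁻¹ * ((M + R) ^ q + q * (M + R) ^ (q - 1) * (u - M)))
            * (M + R) ^ ((q - 1) * (γ - 1))
          = (q⁻¹ + Q⁻¹) * (M + R) ^ Q
            + (1 + q / Q) * ((M + R) ^ (Q - 1) * (u - M)) := by
        calc (1 + q / Q) * (q⁻¹ * ((M + R) ^ q + q * (M + R) ^ (q - 1) * (u - M)))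
              * (M + R) ^ ((q - 1) * (γ - 1))
            = (1 + q / Q) * q⁻¹ * ((M + R) ^ q * (M + R) ^ ((q - 1) * (γ - 1)))
              + (1 + q / Q) * (q * q⁻¹)
                * (((M + R) ^ (q - 1) * (M + R) ^ ((q - 1) * (γ - 1))) * (u - M)) := by
              ring
          _ = (q⁻¹ + Q⁻¹) * (M + R) ^ Q
              + (1 + q / Q) * ((M + R) ^ (Q - 1) * (u - M)) := by
              rw [hb1, hb2, hcq, mul_inv_cancel₀ hq0.ne', mul_one]
      rw [hrw]
      have hX : (0:ℝ) < (M + R) ^ Q := Real.rpow_pos_of_pos hb0 _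
      have hRQ : (0:ℝ) < R ^ Q := Real.rpow_pos_of_pos hR _
      have ht : (0:ℝ) ≤ (M + R) ^ (Q - 1) * (u - M) :=
        mul_nonneg (Real.rpow_nonneg hb0.le _) (by linarith)
      have hqQ : (0:ℝ) < q / Q := div_pos hq0 hQ
      nlinarith [mul_pos (inv_pos.mpr hq0) hX, mul_pos (inv_pos.mpr hQ) hRQ,
        mul_nonneg hqQ.le ht]
  -- assemble
  have hd : f' u ^ (γ - 1) = ((min u M + R) ^ ((q - 1) * (γ - 1))) ^ γ := by
    rw [hf' u hu, ← Real.rpow_mul ha0.le, ← Real.rpow_mul ha0.le, e3]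
  have hA0 : (0:ℝ) < ((min u M + R) ^ ((q - 1) * (γ - 1))) ^ γ :=
    Real.rpow_pos_of_pos (Real.rpow_pos_of_pos ha0 _) _
  have habs : |f u| = f u := abs_of_nonneg hf0
  have hnum : |f u| ^ γ ≤ ((1 + q / Q) * (q⁻¹ * Ftrunc q R M u)
      * (min u M + R) ^ ((q - 1) * (γ - 1))) ^ γ := by
    apply Real.rpow_le_rpow (abs_nonneg _) _ hγ0.le
    rw [habs]; exact hkey
  rw [div_le_iff₀ (hd ▸ hA0), hd]
  calc |f u| ^ γ
      ≤ ((1 + q / Q) * (q⁻¹ * Ftrunc q R M u)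
          * (min u M + R) ^ ((q - 1) * (γ - 1))) ^ γ := hnum
    _ = (1 + q / Q) ^ γ * (q⁻¹ * Ftrunc q R M u) ^ γ
          * ((min u M + R) ^ ((q - 1) * (γ - 1))) ^ γ := by
        rw [Real.mul_rpow (mul_nonneg hc0.le hG0) (Real.rpow_nonneg ha0.le _),
          Real.mul_rpow hc0.le hG0]
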